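/- In the SED game, suppose B_e ≥ t_w^all for all w ∈ W and π_w ≤ B_a for all w ∈ W, and suppose the defender feasible set X = {x ∈ [0,1]^W : ∑_w c_w t_w x_w ≤ B_d} is nonempty. Then inf_{x ∈ X} FracVal(x) ≤ 3 · inf_{x ∈ X} IntVal(x). (This is Theorem 4: by LP strong duality, OPT of the relaxed minimization problem P̂₁ equals min_{x∈X} FracVal(x), and this value is at most three times OPT(P₁) = min_{x∈X} IntVal(x).) -/

import Mathlib

open Finset

/-- Feasibility of an (integral) attacker strategy `(y, e)` in the SED game:
`y ∈ {0,1}^W`, `e ≥ 0`, effort budget `Bₑ`, attack budget `Bₐ`, and `e_w ≤ t_w^all · y_w`. -/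
def AttFeas {W : Type*} [Fintype W] (tall pii : W → ℝ) (Ba Be : ℝ) (y e : W → ℝ) : Prop :=
  (∀ w, y w = 0 ∨ y w = 1) ∧ (∀ w, 0 ≤ e w) ∧
    (∑ w, e w ≤ Be) ∧ (∑ w, pii w * y w ≤ Ba) ∧ ∀ w, e w ≤ tall w * y w

/-- Feasibility for the fractional relaxation: `y ∈ [0,1]^W`. -/
def FracFeas {W : Type*} [Fintype W] (tall pii : W → ℝ) (Ba Be : ℝ) (y e : W → ℝ) : Prop :=
  (∀ w, y w ∈ Set.Icc (0:ℝ) 1) ∧ (∀ w, 0 ≤ e w) ∧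
    (∑ w, e w ≤ Be) ∧ (∑ w, pii w * y w ≤ Ba) ∧ ∀ w, e w ≤ tall w * y w

/-- Payoff `f(x,e) = ∑_w κ_w (1 - x_w) e_w`, where `κ_w = t_w / t_w^all`. -/
noncomputable def payoff {W : Type*} [Fintype W] (t tall x e : W → ℝ) : ℝ :=
  ∑ w, (t w / tall w) * (1 - x w) * e w

/-- `IntVal x`: the attacker's optimal value against defender strategy `x`. -/
noncomputable def IntVal {W : Type*} [Fintype W] (t tall pii : W → ℝ) (Ba Be : ℝ)
    (x : W → ℝ) : ℝ :=
  sSup {v | ∃ y e, AttFeas tall pii Ba Be y e ∧ v = payoff t tall x e}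

/-- `FracVal x`: the attacker's optimal value in the fractional relaxation. -/
noncomputable def FracVal {W : Type*} [Fintype W] (t tall pii : W → ℝ) (Ba Be : ℝ)
    (x : W → ℝ) : ℝ :=
  sSup {v | ∃ y e, FracFeas tall pii Ba Be y e ∧ v = payoff t tall x e}

/-- Feasible defender strategies: `x ∈ [0,1]^W` with `∑_w c_w t_w x_w ≤ B_d`. -/
def DefFeas {W : Type*} [Fintype W] (t c : W → ℝ) (Bd : ℝ) (x : W → ℝ) : Prop :=
  (∀ w, x w ∈ Set.Icc (0:ℝ) 1) ∧ ∑ w, c w * t w * x w ≤ Bd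

/-!
For a fixed defender strategy `x`, the fractional attacker maximises the linear function
`e ↦ ∑_w κ_w (1 - x_w) e_w` over the polytope cut out of the box `0 ≤ e ≤ t^all` by the two
half-spaces `∑_w e_w ≤ B_e` and `∑_w (π_w / t_w^all) e_w ≤ B_a`. The maximum is attained at an
extreme point, and an extreme point of a box cut by `k` half-spaces has at most `k` coordinates
strictly between its bounds: otherwise some nonzero direction supported on those coordinates is
invisible to all `k` constraints, and `e` is the midpoint of two points of the polytope.
The saturated coordinates form an integral attack, and each of the at most two fractional ones
is dominated by attacking that single site with full effort, which is feasible because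
`t_w^all ≤ B_e` and `π_w ≤ B_a`. Hence `FracVal x ≤ 3 · IntVal x` for every `x`.
-/

open Set Filter Topology

theorem IsCompact.exists_mem_extremePoints_isMaxOn {E : Type*} [AddCommGroup E] [Module ℝ E]
    [TopologicalSpace E] [T2Space E] [IsTopologicalAddGroup E] [ContinuousSMul ℝ E]
    [LocallyConvexSpace ℝ E] {s : Set E} (hs : IsCompact s) (hne : s.Nonempty)
    (l : StrongDual ℝ E) : ∃ x ∈ s.extremePoints ℝ, IsMaxOn l s x := by
  have hface : (l.toExposed s).Nonempty := by
    obtain ⟨x, hx, hmax⟩ := hs.exists_isMaxOn hne l.continuous.continuousOn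
    exact ⟨x, hx, hmax⟩
  have hclosed : IsClosed {x | ∀ y ∈ s, l y ≤ l x} := by
    simp_rw [ofPred_forall]
    exact isClosed_biInter fun y _ => isClosed_le continuous_const l.continuous
  obtain ⟨x, hx⟩ := (hs.inter_right hclosed).extremePoints_nonempty hface
  exact ⟨x, ContinuousLinearMap.toExposed.isExposed.isExtreme.extremePoints_subset_extremePoints hx,
    (extremePoints_subset hx).2⟩

section BoxPolytope

variable {W ι : Type*} [Fintype W]

def boxPolytope (u : W → ℝ) (g : ι → W → ℝ) (b : ι → ℝ) : Set (W → ℝ) :=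
  Icc 0 u ∩ ⋂ i, {e | ∑ w, g i w * e w ≤ b i}

noncomputable def fracCoords (u e : W → ℝ) : Finset W := {w | e w ≠ 0 ∧ e w ≠ u w}

theorem mem_boxPolytope {u e : W → ℝ} {g : ι → W → ℝ} {b : ι → ℝ} :
    e ∈ boxPolytope u g b ↔ e ∈ Icc 0 u ∧ ∀ i, ∑ w, g i w * e w ≤ b i := by
  simp [boxPolytope]

theorem isCompact_boxPolytope (u : W → ℝ) (g : ι → W → ℝ) (b : ι → ℝ) :
    IsCompact (boxPolytope u g b) :=
  isCompact_Icc.inter_right <| isClosed_iInter fun i => isClosed_le (by fun_prop) continuous_const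

theorem exists_mem_extremePoints_boxPolytope_sum_mul_le {u e : W → ℝ} {g : ι → W → ℝ}
    {b : ι → ℝ} (a : W → ℝ) (he : e ∈ boxPolytope u g b) :
    ∃ e' ∈ (boxPolytope u g b).extremePoints ℝ, ∑ w, a w * e w ≤ ∑ w, a w * e' w := by
  obtain ⟨e', he', hmax⟩ := (isCompact_boxPolytope u g b).exists_mem_extremePoints_isMaxOn ⟨e, he⟩
    (LinearMap.toContinuousLinearMap (Fintype.linearCombination ℝ a))
  refine ⟨e', he', ?_⟩
  simpa [Fintype.linearCombination_apply, mul_comm] using hmax he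

theorem exists_ne_zero_sum_mul_eq_zero [Fintype ι] (g : ι → W → ℝ) {F : Finset W}
    (hF : Fintype.card ι < #F) :
    ∃ d : W → ℝ, d ≠ 0 ∧ (∀ w ∉ F, d w = 0) ∧ ∀ i, ∑ w, g i w * d w = 0 := by
  classical
  have hdep : ¬ LinearIndepOn ℝ (fun w i => g i w) (F : Set W) := fun h => by
    have hle := h.fintype_card_le_finrank
    simp only [SetLike.coe_sort_coe, Fintype.card_coe, Module.finrank_fintype_fun_eq_card] at hle
    omega
  simp only [linearIndepOn_finset_iff, not_forall] at hdep
  obtain ⟨f, hf, w₀, hw₀F, hw₀⟩ := hdep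
  refine ⟨fun w => if w ∈ F then f w else 0, fun hd => hw₀ ?_, fun w hw => if_neg hw,
    fun i => ?_⟩
  · simpa [hw₀F] using congrFun hd w₀
  · simpa [mul_ite, sum_ite_mem, mul_comm] using congrFun hf i

theorem eventually_add_smul_mem_boxPolytope {u e d : W → ℝ} {g : ι → W → ℝ} {b : ι → ℝ}
    (he : e ∈ boxPolytope u g b) (hd : ∀ w, d w ≠ 0 → e w ∈ Ioo 0 (u w))
    (hgd : ∀ i, ∑ w, g i w * d w = 0) :
    ∀ᶠ s in 𝓝 (0 : ℝ), e + s • d ∈ boxPolytope u g b := by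
  rw [mem_boxPolytope] at he
  have hbox : ∀ᶠ s in 𝓝 (0 : ℝ), ∀ w, e w + s * d w ∈ Icc 0 (u w) := by
    refine eventually_all.2 fun w => ?_
    by_cases hdw : d w = 0
    · simpa [hdw] using And.intro (he.1.1 w) (he.1.2 w)
    · have hlim : Tendsto (fun s : ℝ => e w + s * d w) (𝓝 0) (𝓝 (e w)) :=
        Continuous.tendsto' (by fun_prop) _ _ (by simp)
      exact (hlim.eventually (Ioo_mem_nhds (hd w hdw).1 (hd w hdw).2)).mono
        fun s hs => Ioo_subset_Icc_self hs
  filter_upwards [hbox] with s hs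
  refine mem_boxPolytope.2 ⟨⟨fun w => (hs w).1, fun w => (hs w).2⟩, fun i => ?_⟩
  simpa [mul_add, sum_add_distrib, mul_left_comm _ s, ← mul_sum, hgd i] using he.2 i

theorem card_fracCoords_le_of_mem_extremePoints [Fintype ι] {u e : W → ℝ} {g : ι → W → ℝ}
    {b : ι → ℝ} (he : e ∈ (boxPolytope u g b).extremePoints ℝ) :
    #(fracCoords u e) ≤ Fintype.card ι := by
  by_contra! hcard
  obtain ⟨d, hd0, hdF, hgd⟩ := exists_ne_zero_sum_mul_eq_zero g hcard
  have heP := extremePoints_subset he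
  have hdint : ∀ w, d w ≠ 0 → e w ∈ Ioo 0 (u w) := fun w hw => by
    have hwF : e w ≠ 0 ∧ e w ≠ u w := by
      simpa [fracCoords] using not_imp_comm.1 (hdF w) hw
    have hbox := (mem_boxPolytope.1 heP).1
    exact ⟨(hbox.1 w).lt_of_ne' hwF.1, (hbox.2 w).lt_of_ne hwF.2⟩
  have hnear := eventually_add_smul_mem_boxPolytope heP hdint hgd
  obtain ⟨s, ⟨hplus, hminus⟩, hs⟩ := (((hnear.and
    ((continuous_neg.tendsto' 0 0 neg_zero).eventually hnear)).filter_mono nhdsWithin_le_nhds).and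
    self_mem_nhdsWithin).exists (f := 𝓝[≠] (0 : ℝ))
  rw [neg_smul, ← sub_eq_add_neg] at hminus
  have hfixed := he.2 hplus hminus (mem_openSegment_add_sub e (s • d))
  exact hd0 ((smul_eq_zero.1 (add_eq_left.1 hfixed)).resolve_left (by simpa using hs))

theorem sum_filter_eq_mul_le {u e : W → ℝ} {g : ι → W → ℝ} {b : ι → ℝ}
    (he : e ∈ boxPolytope u g b) (i : ι) (hg : ∀ w, 0 ≤ g i w) :
    ∑ w with e w = u w, g i w * u w ≤ b i := by
  have he := mem_boxPolytope.1 he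
  calc ∑ w with e w = u w, g i w * u w = ∑ w with e w = u w, g i w * e w :=
        sum_congr rfl fun w hw => by rw [(mem_filter.1 hw).2]
    _ ≤ ∑ w, g i w * e w :=
        sum_le_sum_of_subset_of_nonneg (subset_univ _) fun w _ _ => mul_nonneg (hg w) (he.1.1 w)
    _ ≤ b i := he.2 i

theorem sum_mul_le_sum_filter_add_card_fracCoords_mul {u a e : W → ℝ} {M : ℝ}
    (he : e ∈ Icc 0 u) (ha : 0 ≤ a) (hM : ∀ w, a w * u w ≤ M) :
    ∑ w, a w * e w ≤ ∑ w with e w = u w, a w * u w + #(fracCoords u e) * M := by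
  rw [← sum_filter_add_sum_filter_not univ (fun w => e w = u w)]
  gcongr ?_ + ?_
  · exact (sum_congr rfl fun w hw => by rw [(mem_filter.1 hw).2]).le
  · calc ∑ w with ¬e w = u w, a w * e w = ∑ w ∈ fracCoords u e, a w * e w := by
          refine (sum_subset (fun w hw => ?_) fun w hw hwF => ?_).symm <;>
            simp_all [fracCoords]
      _ ≤ ∑ w ∈ fracCoords u e, M :=
          sum_le_sum fun w _ => (mul_le_mul_of_nonneg_left (he.2 w) (ha w)).trans (hM w)
      _ = #(fracCoords u e) * M := by rw [sum_const, nsmul_eq_mul]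

end BoxPolytope

section SED

variable {W : Type*} [Fintype W] {t tall pii x y e : W → ℝ} {Ba Be : ℝ}

theorem AttFeas.fracFeas (h : AttFeas tall pii Ba Be y e) : FracFeas tall pii Ba Be y e :=
  ⟨fun w => by rcases h.1 w with hw | hw <;> simp [hw], h.2⟩

theorem FracFeas.mem_Icc (h : FracFeas tall pii Ba Be y e) (htall : ∀ w, 0 ≤ tall w) :
    e ∈ Icc 0 tall :=
  ⟨h.2.1, fun w => (h.2.2.2.2 w).trans (mul_le_of_le_one_right (htall w) (h.1 w).2)⟩

theorem attFeas_indicator [DecidableEq W] (S : Finset W) (htall : ∀ w, 0 ≤ tall w)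
    (hBe : ∑ w ∈ S, tall w ≤ Be) (hBa : ∑ w ∈ S, pii w ≤ Ba) :
    AttFeas tall pii Ba Be (fun w => if w ∈ S then 1 else 0)
      (fun w => if w ∈ S then tall w else 0) := by
  refine ⟨fun w => ?_, fun w => ?_, by simpa [sum_ite_mem], by simpa [sum_ite_mem], fun w => ?_⟩ <;>
    by_cases hw : w ∈ S <;> simp [hw, htall w]

theorem bddAbove_fracPayoffs (htall : ∀ w, 0 ≤ tall w) :
    BddAbove {v | ∃ y e, FracFeas tall pii Ba Be y e ∧ v = payoff t tall x e} := by
  refine ⟨∑ w, |t w / tall w * (1 - x w)| * tall w, ?_⟩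
  rintro _ ⟨y, e, h, rfl⟩
  have he := h.mem_Icc htall
  exact sum_le_sum fun w _ => (mul_le_mul_of_nonneg_right (le_abs_self _) (he.1 w)).trans
    (mul_le_mul_of_nonneg_left (he.2 w) (abs_nonneg _))

theorem attFeas_zero (hBa : 0 ≤ Ba) (hBe : 0 ≤ Be) : AttFeas tall pii Ba Be 0 0 :=
  ⟨fun _ => Or.inl rfl, fun _ => le_rfl, by simpa, by simpa, fun _ => by simp⟩

theorem attPayoffs_nonempty (hBa : 0 ≤ Ba) (hBe : 0 ≤ Be) :
    {v | ∃ y e, AttFeas tall pii Ba Be y e ∧ v = payoff t tall x e}.Nonempty :=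
  ⟨_, 0, 0, attFeas_zero hBa hBe, rfl⟩

theorem attPayoffs_subset_fracPayoffs :
    {v | ∃ y e, AttFeas tall pii Ba Be y e ∧ v = payoff t tall x e} ⊆
      {v | ∃ y e, FracFeas tall pii Ba Be y e ∧ v = payoff t tall x e} := by
  rintro _ ⟨y, e, h, rfl⟩
  exact ⟨y, e, h.fracFeas, rfl⟩

theorem bddAbove_attPayoffs (htall : ∀ w, 0 ≤ tall w) :
    BddAbove {v | ∃ y e, AttFeas tall pii Ba Be y e ∧ v = payoff t tall x e} :=
  (bddAbove_fracPayoffs htall).mono attPayoffs_subset_fracPayoffs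

theorem AttFeas.payoff_le_intVal (h : AttFeas tall pii Ba Be y e) (htall : ∀ w, 0 ≤ tall w) :
    payoff t tall x e ≤ IntVal t tall pii Ba Be x :=
  le_csSup (bddAbove_attPayoffs htall) ⟨y, e, h, rfl⟩

theorem intVal_le_fracVal (htall : ∀ w, 0 ≤ tall w) (hBa : 0 ≤ Ba) (hBe : 0 ≤ Be) :
    IntVal t tall pii Ba Be x ≤ FracVal t tall pii Ba Be x :=
  csSup_le_csSup (bddAbove_fracPayoffs htall) (attPayoffs_nonempty hBa hBe)
    attPayoffs_subset_fracPayoffs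

theorem sum_mul_le_intVal (S : Finset W) (htall : ∀ w, 0 ≤ tall w) (hBe : ∑ w ∈ S, tall w ≤ Be)
    (hBa : ∑ w ∈ S, pii w ≤ Ba) :
    ∑ w ∈ S, t w / tall w * (1 - x w) * tall w ≤ IntVal t tall pii Ba Be x := by
  classical
  simpa [payoff, mul_ite, sum_ite_mem] using
    (attFeas_indicator S htall hBe hBa).payoff_le_intVal (t := t) (x := x) htall

theorem intVal_nonneg (htall : ∀ w, 0 ≤ tall w) (hBa : 0 ≤ Ba) (hBe : 0 ≤ Be) :
    0 ≤ IntVal t tall pii Ba Be x := by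
  simpa [payoff] using (attFeas_zero hBa hBe).payoff_le_intVal (t := t) (x := x) htall

/-- Eliminating `y` (take `y_w = e_w / t_w^all`) turns a fractional attack into a point of this
polytope. -/
def effortPolytope (tall pii : W → ℝ) (Ba Be : ℝ) : Set (W → ℝ) :=
  boxPolytope tall ![fun _ => 1, fun w => pii w / tall w] ![Be, Ba]

theorem FracFeas.mem_effortPolytope (h : FracFeas tall pii Ba Be y e)
    (htall : ∀ w, 0 < tall w) (hpii : ∀ w, 0 ≤ pii w) : e ∈ effortPolytope tall pii Ba Be := by
  refine mem_boxPolytope.2 ⟨h.mem_Icc fun w => (htall w).le,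
    Fin.forall_fin_two.2 ⟨by simpa using h.2.2.1, (sum_le_sum fun w _ => ?_).trans h.2.2.2.1⟩⟩
  calc pii w / tall w * e w ≤ pii w / tall w * (tall w * y w) :=
        mul_le_mul_of_nonneg_left (h.2.2.2.2 w) (div_nonneg (hpii w) (htall w).le)
    _ = pii w * y w := by field_simp [(htall w).ne']

theorem sum_le_of_mem_effortPolytope (he : e ∈ effortPolytope tall pii Ba Be)
    (htall : ∀ w, 0 < tall w) (hpii : ∀ w, 0 ≤ pii w) :
    ∑ w with e w = tall w, tall w ≤ Be ∧ ∑ w with e w = tall w, pii w ≤ Ba :=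
  ⟨by simpa using sum_filter_eq_mul_le he 0 (by simp),
    by simpa [(htall _).ne'] using
      sum_filter_eq_mul_le he 1 fun w => by simpa using div_nonneg (hpii w) (htall w).le⟩

theorem fracVal_le_three_mul_intVal (ht : ∀ w, 0 ≤ t w) (htall : ∀ w, 0 < tall w)
    (hpii : ∀ w, 0 ≤ pii w) (hBa : 0 ≤ Ba) (hBe : 0 ≤ Be) (hBe' : ∀ w, tall w ≤ Be)
    (hBa' : ∀ w, pii w ≤ Ba) (hx : ∀ w, x w ≤ 1) :
    FracVal t tall pii Ba Be x ≤ 3 * IntVal t tall pii Ba Be x := by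
  have htall₀ : ∀ w, 0 ≤ tall w := fun w => (htall w).le
  refine csSup_le ((attPayoffs_nonempty hBa hBe).mono attPayoffs_subset_fracPayoffs) ?_
  rintro _ ⟨y, e, h, rfl⟩
  set a : W → ℝ := fun w => t w / tall w * (1 - x w)
  have ha : 0 ≤ a := fun w => mul_nonneg (div_nonneg (ht w) (htall₀ w)) (sub_nonneg.2 (hx w))
  obtain ⟨e', hext, hle⟩ :=
    exists_mem_extremePoints_boxPolytope_sum_mul_le a (h.mem_effortPolytope htall hpii)
  have he' := extremePoints_subset hext
  have hcard : #(fracCoords tall e') ≤ 2 := by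
    simpa using card_fracCoords_le_of_mem_extremePoints hext
  obtain ⟨hSBe, hSBa⟩ := sum_le_of_mem_effortPolytope he' htall hpii
  have hsingle : ∀ w, a w * tall w ≤ IntVal t tall pii Ba Be x := fun w => by
    simpa using sum_mul_le_intVal {w} htall₀ (by simpa using hBe' w) (by simpa using hBa' w)
  calc payoff t tall x e = ∑ w, a w * e w := rfl
    _ ≤ ∑ w, a w * e' w := hle
    _ ≤ ∑ w with e' w = tall w, a w * tall w + #(fracCoords tall e') * IntVal t tall pii Ba Be x :=
        sum_mul_le_sum_filter_add_card_fracCoords_mul (mem_boxPolytope.1 he').1 ha hsingle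
    _ ≤ IntVal t tall pii Ba Be x + 2 * IntVal t tall pii Ba Be x := by
        gcongr
        · exact sum_mul_le_intVal _ htall₀ hSBe hSBa
        · exact intVal_nonneg htall₀ hBa hBe
        · exact_mod_cast hcard
    _ = 3 * IntVal t tall pii Ba Be x := by ring

end SED

theorem sInf_le_mul_sInf {α : Type*} {p : α → Prop} {f g : α → ℝ} {c : ℝ} (hc : 0 < c)
    (hp : ∃ x, p x) (hf : BddBelow {v | ∃ x, p x ∧ v = f x}) (hfg : ∀ x, p x → f x ≤ c * g x) :
    sInf {v | ∃ x, p x ∧ v = f x} ≤ c * sInf {v | ∃ x, p x ∧ v = g x} := by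
  obtain ⟨x₀, hx₀⟩ := hp
  rw [← div_le_iff₀' hc]
  refine le_csInf ⟨g x₀, x₀, hx₀, rfl⟩ ?_
  rintro _ ⟨x, hx, rfl⟩
  rw [div_le_iff₀' hc]
  exact (csInf_le hf ⟨x, hx, rfl⟩).trans (hfg x hx)

theorem relaxed_opt_le_three_opt_general
    {W : Type*} [Fintype W] (t tall c pii : W → ℝ) (Bd Ba Be : ℝ)
    (ht : ∀ w, 0 < t w) (htall : ∀ w, t w ≤ tall w)
    (hpii : ∀ w, 0 < pii w)
    (hBa : 0 ≤ Ba) (hBe : 0 ≤ Be)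
    (hBe' : ∀ w, tall w ≤ Be) (haff : ∀ w, pii w ≤ Ba)
    (hX : ∃ x : W → ℝ, DefFeas t c Bd x) :
    sInf {v : ℝ | ∃ x : W → ℝ, DefFeas t c Bd x ∧ v = FracVal t tall pii Ba Be x}
      ≤ 3 * sInf {v : ℝ | ∃ x : W → ℝ, DefFeas t c Bd x ∧ v = IntVal t tall pii Ba Be x} := by
  have htall₀ : ∀ w, 0 < tall w := fun w => (ht w).trans_le (htall w)
  refine sInf_le_mul_sInf three_pos hX ⟨0, ?_⟩ fun x hx => fracVal_le_three_mul_intVal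
    (fun w => (ht w).le) htall₀ (fun w => (hpii w).le) hBa hBe hBe' haff fun w => (hx.1 w).2
  rintro _ ⟨x, -, rfl⟩
  exact (intVal_nonneg (fun w => (htall₀ w).le) hBa hBe).trans
    (intVal_le_fracVal (fun w => (htall₀ w).le) hBa hBe)

/-- Theorem 4: if `B_e ≥ t_w^all` and `π_w ≤ B_a` for all `w`,
and the defender feasible set `X` is nonempty, then
`inf_{x ∈ X} FracVal(x) ≤ 3 · inf_{x ∈ X} IntVal(x)`. -/
theorem relaxed_opt_le_three_opt
    {W : Type*} [Fintype W] (t tall c pii : W → ℝ) (Bd Ba Be : ℝ)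
    (ht : ∀ w, 0 < t w) (htall : ∀ w, t w ≤ tall w)
    (hc : ∀ w, 0 < c w) (hpii : ∀ w, 0 < pii w)
    (hBd : 0 ≤ Bd) (hBa : 0 ≤ Ba) (hBe : 0 ≤ Be)
    (hBe' : ∀ w, tall w ≤ Be) (haff : ∀ w, pii w ≤ Ba)
    (hX : ∃ x : W → ℝ, DefFeas t c Bd x) :
    sInf {v : ℝ | ∃ x : W → ℝ, DefFeas t c Bd x ∧ v = FracVal t tall pii Ba Be x}
      ≤ 3 * sInf {v : ℝ | ∃ x : W → ℝ, DefFeas t c Bd x ∧ v = IntVal t tall pii Ba Be x} :=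
  relaxed_opt_le_three_opt_general t tall c pii Bd Ba Be ht htall hpii hBa hBe hBe' haff hX
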